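/- Let R be a Hermitian d×d matrix, σ a positive semidefinite d×d matrix with trace 1, μ = Tr(R²σ), and 0 ≤ δ ≤ 1. Suppose ‖σ^{1/2} R σ^{1/2}‖_{S1} ≥ (1 − δ)√μ. Then ‖(R² − μ·Id)σ^{1/2}‖_F² ≤ C √δ ‖R‖_{op}² μ for a universal constant C. -/

import Mathlib

open Matrix ComplexOrder

/-- The square root of a positive semidefinite matrix, as defined in the older Mathlib. -/
noncomputable def Matrix.PosSemidef.sqrt {n : Type*} [Fintype n] [DecidableEq n] {𝕜 : Type*} [RCLike 𝕜]
    {A : Matrix n n 𝕜} (hA : A.PosSemidef) : Matrix n n 𝕜 :=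
  hA.1.eigenvectorUnitary.1 * diagonal ((↑) ∘ (Real.sqrt ·) ∘ hA.1.eigenvalues) *
  (star hA.1.eigenvectorUnitary : Matrix n n 𝕜)

/-- The Frobenius norm of a complex square matrix: `(Tr(AᴴA))^{1/2}`. -/
noncomputable def frobNorm {d : ℕ} (A : Matrix (Fin d) (Fin d) ℂ) : ℝ :=
  Real.sqrt ((Aᴴ * A).trace.re)

/-- The Schatten-1 (nuclear) norm: the sum of singular values, i.e. `Tr((AᴴA)^{1/2})`. -/
noncomputable def nucNorm {d : ℕ} (A : Matrix (Fin d) (Fin d) ℂ) : ℝ :=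
  ((Matrix.posSemidef_conjTranspose_mul_self A).sqrt).trace.re
/-- The operator norm (largest singular value) of a complex square matrix. -/
noncomputable def opNorm {d : ℕ} (A : Matrix (Fin d) (Fin d) ℂ) : ℝ :=
  ‖Matrix.toEuclideanCLM (𝕜 := ℂ) A‖

/-!
Write `s = σ^{1/2}`, `B = R s` and `M = R² - μ`, and view matrices as vectors for the
Hilbert–Schmidt inner product `⟪X, Y⟫ = Tr(Xᴴ Y)`, so that `‖B‖² = μ`. If `U` is the sign of the
Hermitian matrix `s R s`, then `X = s U` is a unit vector with `X Xᴴ = σ` and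
`Re ⟪X, B⟫ = ‖s R s‖₁ ≥ (1 - δ) √μ`; hence `‖B - √μ X‖² ≤ 2 δ μ`.
Since `M` commutes with `R` and `Re Tr(M σ) = 0`, we get `‖M s‖² = Re ⟪B, M B⟫` and
`Re ⟪X, M X⟫ = 0`, so `‖M s‖² = Re ⟪B - √μ X, M (B + √μ X)⟫ ≤ √(2δμ) · ‖M‖ · 2√μ`.
Finally `0 ≤ μ ≤ ‖R‖²` and the spectrum of `R` lies in `[-‖R‖, ‖R‖]`, so `‖M‖ ≤ ‖R‖²`,
which gives the constant `C = 2√2`.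
-/

open scoped MatrixOrder Matrix.Norms.L2Operator

lemma norm_sub_norm_smul_sq_le {𝕜 E : Type*} [RCLike 𝕜] [NormedAddCommGroup E]
    [InnerProductSpace 𝕜 E] {x y : E} {δ : ℝ} (hy : ‖y‖ = 1)
    (h : (1 - δ) * ‖x‖ ≤ RCLike.re (inner 𝕜 y x)) :
    ‖x - (‖x‖ : 𝕜) • y‖ ^ 2 ≤ 2 * δ * ‖x‖ ^ 2 := by
  rw [@norm_sub_sq 𝕜, inner_smul_right, RCLike.re_ofReal_mul, norm_smul, RCLike.norm_ofReal,
    abs_norm, hy, mul_one, ← inner_conj_symm, RCLike.conj_re]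
  nlinarith [mul_le_mul_of_nonneg_left h (norm_nonneg x)]

lemma IsSelfAdjoint.norm_mul_self_sub_algebraMap_le {A : Type*} [CStarAlgebra A] {a : A}
    (ha : IsSelfAdjoint a) {c : ℝ} (hc₀ : 0 ≤ c) (hc : c ≤ ‖a‖ ^ 2) :
    ‖a * a - algebraMap ℝ A c‖ ≤ ‖a‖ ^ 2 := by
  nontriviality A
  rw [← cfc_id' ℝ a, ← cfc_mul .., ← cfc_const c a, ← cfc_sub .., cfc_id' ℝ a]
  refine norm_cfc_le (by positivity) fun x hx => ?_
  have hx : |x| ≤ ‖a‖ := spectrum.norm_le_norm_of_mem hx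
  rw [Real.norm_eq_abs, abs_le]
  constructor <;> nlinarith [abs_nonneg x, sq_abs x]

namespace Matrix

variable {m n : Type*} [Fintype m] [Fintype n] {𝕜 : Type*} [RCLike 𝕜]

lemma PosSemidef.sqrt_eq_cfcSqrt [DecidableEq n] {A : Matrix n n 𝕜} (hA : A.PosSemidef) :
    hA.sqrt = CFC.sqrt A := by
  rw [CFC.sqrt_eq_real_sqrt A hA.nonneg, cfcₙ_eq_cfc, hA.1.cfc_eq, IsHermitian.cfc,
    Unitary.conjStarAlgAut_apply]
  rfl

lemma IsHermitian.exists_mem_unitary_star_mul_eq_abs [DecidableEq n] {A : Matrix n n 𝕜}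
    (hA : A.IsHermitian) : ∃ U ∈ unitary (Matrix n n 𝕜), star U * A = CFC.abs A := by
  have hcont (f : ℝ → ℝ) : ContinuousOn f (spectrum ℝ A) := (Set.toFinite _).continuousOn f
  set sign : ℝ → ℝ := fun x => if 0 ≤ x then 1 else -1
  have hU : star (cfc sign A) = cfc sign A := (cfc_predicate sign A).star_eq
  have hsq : cfc sign A * cfc sign A = 1 := by
    rw [← cfc_mul _ _ A (hcont _) (hcont _), ← cfc_one ℝ A]
    congr 1
    funext x
    by_cases hx : 0 ≤ x <;> simp [sign, hx]
  refine ⟨cfc sign A, Unitary.mem_iff.mpr ⟨by rw [hU, hsq], by rw [hU, hsq]⟩, ?_⟩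
  rw [hU, CFC.abs_eq_cfc_norm A hA]
  nth_rw 2 [← cfc_id' ℝ A]
  rw [← cfc_mul _ _ A (hcont _) (hcont _)]
  congr 1
  funext x
  by_cases hx : 0 ≤ x
  · simp [sign, hx, abs_of_nonneg hx]
  · simp [sign, hx, abs_of_neg (not_le.mp hx)]

lemma re_trace_conjTranspose_mul_mul_sub {M : Matrix m m 𝕜} (hM : M.IsHermitian)
    (B Y : Matrix m n 𝕜) :
    RCLike.re (Bᴴ * M * B).trace - RCLike.re (Yᴴ * M * Y).trace
      = RCLike.re ((B - Y)ᴴ * M * (B + Y)).trace := by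
  have hswap : (Yᴴ * M * B).trace = star (Bᴴ * M * Y).trace := by
    rw [← trace_conjTranspose, conjTranspose_mul, conjTranspose_mul, hM.eq,
      conjTranspose_conjTranspose, Matrix.mul_assoc]
  have hexp : (B - Y)ᴴ * M * (B + Y)
      = Bᴴ * M * B - Yᴴ * M * Y + (Bᴴ * M * Y - Yᴴ * M * B) := by
    rw [conjTranspose_sub]
    simp only [Matrix.sub_mul, Matrix.mul_add]
    abel
  rw [hexp, trace_add, trace_sub, trace_sub, hswap, map_add, map_sub, map_sub, RCLike.star_def,
    RCLike.conj_re, sub_self, add_zero]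

lemma re_trace_sub_smul_one_mul_eq_zero [DecidableEq n] (K : Matrix n n 𝕜) {σ : Matrix n n 𝕜}
    (hσ : σ.trace = 1) :
    RCLike.re ((K - (RCLike.re (K * σ).trace : 𝕜) • 1) * σ).trace = 0 := by
  rw [Matrix.sub_mul, trace_sub, Matrix.smul_mul, Matrix.one_mul, trace_smul, hσ, smul_eq_mul,
    mul_one, map_sub, RCLike.ofReal_re, sub_self]

lemma trace_mul_mul_self (s K : Matrix n n 𝕜) : (s * K * s).trace = (K * (s * s)).trace := by
  rw [trace_mul_cycle, ← Matrix.mul_assoc, trace_mul_comm, Matrix.mul_assoc]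

noncomputable def frobeniusVec : Matrix m n 𝕜 →ₗ[𝕜] EuclideanSpace 𝕜 (n × m) where
  toFun X := WithLp.toLp 2 X.vec
  map_add' _ _ := rfl
  map_smul' _ _ := rfl

lemma inner_frobeniusVec (X Y : Matrix m n 𝕜) :
    inner 𝕜 (frobeniusVec X) (frobeniusVec Y) = (Xᴴ * Y).trace := by
  rw [← star_vec_dotProduct_vec, dotProduct_comm]
  rfl

lemma norm_frobeniusVec_sq (X : Matrix m n 𝕜) :
    ‖frobeniusVec X‖ ^ 2 = RCLike.re (Xᴴ * X).trace := by
  rw [@norm_sq_eq_re_inner 𝕜, inner_frobeniusVec]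

lemma norm_frobeniusVec_mul_le [DecidableEq m] (A : Matrix m m ℂ) (Y : Matrix m n ℂ) :
    ‖frobeniusVec (A * Y)‖ ≤ ‖A‖ * ‖frobeniusVec Y‖ := by
  have hle : (Yᴴ * (algebraMap ℝ _ (‖A‖ ^ 2) - Aᴴ * A) * Y).PosSemidef :=
    (le_iff.mp (CStarAlgebra.star_mul_le_algebraMap_norm_sq (a := A))).conjTranspose_mul_mul_same
      Y
  have hexp : Yᴴ * (algebraMap ℝ _ (‖A‖ ^ 2) - Aᴴ * A) * Y
      = (‖A‖ ^ 2) • (Yᴴ * Y) - (A * Y)ᴴ * (A * Y) := by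
    rw [Algebra.algebraMap_eq_smul_one, conjTranspose_mul]
    simp only [Matrix.mul_sub, Matrix.sub_mul, Matrix.mul_smul, Matrix.smul_mul, Matrix.mul_one,
      Matrix.mul_assoc]
  have htr := (RCLike.nonneg_iff (K := ℂ)).mp hle.trace_nonneg |>.1
  rw [hexp, trace_sub, trace_smul, map_sub, RCLike.smul_re, sub_nonneg,
    ← norm_frobeniusVec_sq, ← norm_frobeniusVec_sq, ← mul_pow] at htr
  exact (pow_le_pow_iff_left₀ (norm_nonneg _) (by positivity) two_ne_zero).mp htr

lemma re_trace_conjTranspose_mul_mul_le [DecidableEq m] {M : Matrix m m ℂ} (hM : M.IsHermitian)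
    {X : Matrix m n ℂ} (hX : (Xᴴ * M * X).trace.re = 0) (B : Matrix m n ℂ) (r : ℝ) :
    (Bᴴ * M * B).trace.re
      ≤ ‖frobeniusVec (B - (r : ℂ) • X)‖ * ‖M‖ * ‖frobeniusVec (B + (r : ℂ) • X)‖ := by
  have hzero : ((((r : ℂ) • X)ᴴ * M * ((r : ℂ) • X)).trace).re = 0 := by
    simp [Matrix.smul_mul, Matrix.mul_smul, trace_smul, hX]
  have hsub := re_trace_conjTranspose_mul_mul_sub hM B ((r : ℂ) • X)
  simp only [RCLike.re_to_complex, hzero, sub_zero] at hsub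
  calc (Bᴴ * M * B).trace.re
      = (((B - (r : ℂ) • X)ᴴ * M * (B + (r : ℂ) • X)).trace).re := hsub
    _ = RCLike.re (inner ℂ (frobeniusVec (B - (r : ℂ) • X))
          (frobeniusVec (M * (B + (r : ℂ) • X)))) := by
        rw [inner_frobeniusVec, Matrix.mul_assoc]; rfl
    _ ≤ ‖frobeniusVec (B - (r : ℂ) • X)‖ * ‖frobeniusVec (M * (B + (r : ℂ) • X))‖ :=
        re_inner_le_norm _ _
    _ ≤ _ := by
        rw [mul_assoc]
        gcongr
        exact norm_frobeniusVec_mul_le _ _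

lemma IsHermitian.exists_mul_conjTranspose_eq_and_trace_eq_abs [DecidableEq n]
    {s R : Matrix n n 𝕜} (hs : s.IsHermitian) (hR : R.IsHermitian) :
    ∃ X : Matrix n n 𝕜,
      X * Xᴴ = s * s ∧ (Xᴴ * (R * s)).trace = (CFC.abs (s * R * s)).trace := by
  have hA : (s * R * s).IsHermitian := by
    simpa [hs.eq] using isHermitian_conjTranspose_mul_mul s hR
  obtain ⟨U, hU, hUA⟩ := hA.exists_mem_unitary_star_mul_eq_abs
  refine ⟨s * U, ?_, ?_⟩
  · rw [conjTranspose_mul, hs.eq, Matrix.mul_assoc, ← Matrix.mul_assoc U,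
      ← star_eq_conjTranspose, Unitary.mul_star_self_of_mem hU, Matrix.one_mul]
  · rw [← hUA, conjTranspose_mul, hs.eq, star_eq_conjTranspose]
    simp only [Matrix.mul_assoc]

lemma IsHermitian.norm_frobeniusVec_mul_self_sub_smul_one_mul_sq [DecidableEq n]
    {R s : Matrix n n 𝕜} (hR : R.IsHermitian) (hs : s.IsHermitian) (htr : (s * s).trace = 1)
    {μ : ℝ} (hμ : RCLike.re (R * R * (s * s)).trace = μ) :
    ‖frobeniusVec ((R * R - (μ : 𝕜) • 1) * s)‖ ^ 2
      = RCLike.re ((R * s)ᴴ * (R * R - (μ : 𝕜) • 1) * (R * s)).trace := by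
  set M := R * R - (μ : 𝕜) • 1
  have hMH : Mᴴ = M := by
    simp [M, conjTranspose_sub, conjTranspose_smul, hR.eq]
  have hMσ : RCLike.re (M * (s * s)).trace = 0 := by
    simpa [M, hμ] using re_trace_sub_smul_one_mul_eq_zero (R * R) htr
  -- `M` is a polynomial in `R`, so `R M R = R² M = M² + μ M`.
  have hdiff : R * M * R - M * M = (μ : 𝕜) • M := by
    simp only [M, Matrix.mul_sub, Matrix.sub_mul, Matrix.mul_smul, Matrix.smul_mul,
      Matrix.mul_one, Matrix.one_mul, Matrix.mul_assoc, smul_sub]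
    abel
  rw [norm_frobeniusVec_sq, conjTranspose_mul, conjTranspose_mul, hMH, hs.eq, hR.eq,
    ← sub_eq_zero, ← map_sub,
    show s * M * (M * s) = s * (M * M) * s by simp only [Matrix.mul_assoc],
    show s * R * M * (R * s) = s * (R * M * R) * s by simp only [Matrix.mul_assoc],
    trace_mul_mul_self, trace_mul_mul_self, ← trace_sub, ← Matrix.sub_mul, ← neg_sub, hdiff,
    Matrix.neg_mul, trace_neg, map_neg, Matrix.smul_mul, trace_smul, smul_eq_mul,
    RCLike.re_ofReal_mul, hMσ, mul_zero, neg_zero]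

lemma PosSemidef.norm_frobeniusVec_mul_sqrt_sq [DecidableEq n] {σ : Matrix n n 𝕜}
    (hσ : σ.PosSemidef) (R : Matrix n n 𝕜) :
    ‖frobeniusVec (R * CFC.sqrt σ)‖ ^ 2 = RCLike.re (Rᴴ * R * σ).trace := by
  rw [norm_frobeniusVec_sq, conjTranspose_mul, (CFC.sqrt_nonneg σ).posSemidef.isHermitian.eq,
    ← Matrix.mul_assoc, Matrix.mul_assoc _ Rᴴ, trace_mul_mul_self,
    CFC.sqrt_mul_sqrt_self σ hσ.nonneg]

lemma PosSemidef.re_trace_conjTranspose_mul_self_mul_le [DecidableEq n] {σ : Matrix n n ℂ}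
    (hσ : σ.PosSemidef) (htr : σ.trace = 1) (R : Matrix n n ℂ) :
    (Rᴴ * R * σ).trace.re ≤ ‖R‖ ^ 2 := by
  have hs : ‖frobeniusVec (CFC.sqrt σ)‖ = 1 := by
    rw [← pow_eq_one_iff_of_nonneg (norm_nonneg _) two_ne_zero, ← Matrix.one_mul (CFC.sqrt σ),
      hσ.norm_frobeniusVec_mul_sqrt_sq, conjTranspose_one, Matrix.one_mul, Matrix.one_mul, htr,
      RCLike.one_re]
  have hRs := norm_frobeniusVec_mul_le R (CFC.sqrt σ)
  rw [hs, mul_one] at hRs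
  rw [← RCLike.re_to_complex, ← hσ.norm_frobeniusVec_mul_sqrt_sq]
  exact pow_le_pow_left₀ (norm_nonneg _) hRs 2

lemma PosSemidef.exists_norm_frobeniusVec_sub_sq_le [DecidableEq n] {σ R : Matrix n n 𝕜}
    (hσ : σ.PosSemidef) (htr : σ.trace = 1) (hR : R.IsHermitian) {δ : ℝ}
    (h : (1 - δ) * ‖frobeniusVec (R * CFC.sqrt σ)‖
      ≤ RCLike.re (CFC.abs (CFC.sqrt σ * R * CFC.sqrt σ)).trace) :
    ∃ X : Matrix n n 𝕜, X * Xᴴ = σ ∧ ‖frobeniusVec X‖ = 1 ∧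
      ‖frobeniusVec (R * CFC.sqrt σ - (‖frobeniusVec (R * CFC.sqrt σ)‖ : 𝕜) • X)‖ ^ 2
        ≤ 2 * δ * ‖frobeniusVec (R * CFC.sqrt σ)‖ ^ 2 := by
  obtain ⟨X, hXX, hXB⟩ :=
    (CFC.sqrt_nonneg σ).posSemidef.isHermitian.exists_mul_conjTranspose_eq_and_trace_eq_abs hR
  rw [CFC.sqrt_mul_sqrt_self σ hσ.nonneg] at hXX
  have hX : ‖frobeniusVec X‖ = 1 := by
    rw [← pow_eq_one_iff_of_nonneg (norm_nonneg _) two_ne_zero, norm_frobeniusVec_sq,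
      trace_mul_comm, hXX, htr, RCLike.one_re]
  refine ⟨X, hXX, hX, ?_⟩
  rw [map_sub, map_smul]
  exact norm_sub_norm_smul_sq_le hX (by rwa [inner_frobeniusVec, hXB])

theorem IsHermitian.norm_frobeniusVec_mul_self_sub_smul_one_mul_sqrt_sq_le [DecidableEq n]
    {R σ : Matrix n n ℂ} (hR : R.IsHermitian) (hσ : σ.PosSemidef) (htr : σ.trace = 1)
    {μ δ : ℝ} (hμ : (R * R * σ).trace.re = μ) (hδ : 0 ≤ δ)
    (h : (1 - δ) * √μ ≤ (CFC.abs (CFC.sqrt σ * R * CFC.sqrt σ)).trace.re) :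
    ‖frobeniusVec ((R * R - (μ : ℂ) • 1) * CFC.sqrt σ)‖ ^ 2 ≤ 2 * √2 * √δ * ‖R‖ ^ 2 * μ := by
  set s := CFC.sqrt σ
  set B := R * s
  set M := R * R - (μ : ℂ) • 1
  have hB2 : ‖frobeniusVec B‖ ^ 2 = μ := by
    rw [hσ.norm_frobeniusVec_mul_sqrt_sq, hR.eq, RCLike.re_to_complex, hμ]
  have hμ0 : 0 ≤ μ := hB2 ▸ sq_nonneg _
  have hB : ‖frobeniusVec B‖ = √μ := by rw [← hB2, Real.sqrt_sq (norm_nonneg _)]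
  obtain ⟨X, hXX, hX, hE⟩ :=
    hσ.exists_norm_frobeniusVec_sub_sq_le htr hR (δ := δ) (by rwa [hB])
  rw [hB, Real.sq_sqrt hμ0] at hE
  have hXM : (Xᴴ * M * X).trace.re = 0 := by
    rw [trace_mul_cycle, hXX, trace_mul_comm]
    simpa [M, hμ] using re_trace_sub_smul_one_mul_eq_zero (R * R) htr
  have hM : ‖M‖ ≤ ‖R‖ ^ 2 := by
    have hμR : μ ≤ ‖R‖ ^ 2 := by
      simpa only [hR.eq, hμ] using hσ.re_trace_conjTranspose_mul_self_mul_le htr R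
    have := hR.isSelfAdjoint.norm_mul_self_sub_algebraMap_le hμ0 hμR
    rwa [Algebra.algebraMap_eq_smul_one, ← Complex.coe_smul] at this
  have hBsub : ‖frobeniusVec (B - (√μ : ℂ) • X)‖ ≤ √2 * √δ * √μ := by
    rw [← Real.sqrt_mul zero_le_two, ← Real.sqrt_mul (by positivity)]
    exact Real.le_sqrt_of_sq_le hE
  have hBadd : ‖frobeniusVec (B + (√μ : ℂ) • X)‖ ≤ 2 * √μ := by
    calc ‖frobeniusVec (B + (√μ : ℂ) • X)‖
        ≤ ‖frobeniusVec B‖ + ‖(√μ : ℂ) • frobeniusVec X‖ := by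
          rw [map_add, map_smul]
          exact norm_add_le _ _
      _ = 2 * √μ := by
          rw [norm_smul, hX, hB, Complex.norm_real, Real.norm_of_nonneg (Real.sqrt_nonneg _)]
          ring
  have hs : s.IsHermitian := (CFC.sqrt_nonneg σ).posSemidef.isHermitian
  have hss : s * s = σ := CFC.sqrt_mul_sqrt_self σ hσ.nonneg
  calc ‖frobeniusVec (M * s)‖ ^ 2 = (Bᴴ * M * B).trace.re :=
        hR.norm_frobeniusVec_mul_self_sub_smul_one_mul_sq hs (by rwa [hss]) (μ := μ)
          (by rwa [hss])
    _ ≤ ‖frobeniusVec (B - (√μ : ℂ) • X)‖ * ‖M‖ * ‖frobeniusVec (B + (√μ : ℂ) • X)‖ :=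
        re_trace_conjTranspose_mul_mul_le (by simp [M, IsHermitian, hR.eq]) hXM B √μ
    _ ≤ (√2 * √δ * √μ) * ‖R‖ ^ 2 * (2 * √μ) := by gcongr
    _ = 2 * √2 * √δ * ‖R‖ ^ 2 * μ := by
        linear_combination (2 * √2 * √δ * ‖R‖ ^ 2) * Real.mul_self_sqrt hμ0

end Matrix

lemma frobNorm_eq_norm_frobeniusVec {d : ℕ} (X : Matrix (Fin d) (Fin d) ℂ) :
    frobNorm X = ‖frobeniusVec X‖ := by
  rw [frobNorm, ← RCLike.re_to_complex, ← norm_frobeniusVec_sq, Real.sqrt_sq (norm_nonneg _)]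

lemma nucNorm_eq_re_trace_abs {d : ℕ} (A : Matrix (Fin d) (Fin d) ℂ) :
    nucNorm A = (CFC.abs A).trace.re := by
  rw [nucNorm, PosSemidef.sqrt_eq_cfcSqrt]
  rfl

lemma opNorm_eq_l2_opNorm {d : ℕ} (A : Matrix (Fin d) (Fin d) ℂ) : opNorm A = ‖A‖ := rfl

/-- There is a universal constant `C` such that: for Hermitian `R`, positive semidefinite
`σ` of trace `1`, `μ = Tr(R²σ)`, and `0 ≤ δ ≤ 1`, if
`‖σ^{1/2} R σ^{1/2}‖₁ ≥ (1 - δ)√μ`, then `‖(R² - μ·Id)σ^{1/2}‖_F² ≤ C √δ ‖R‖_op² μ`. -/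
theorem near_saturation : ∃ C : ℝ, 0 < C ∧
    ∀ (d : ℕ) (R σ : Matrix (Fin d) (Fin d) ℂ) (hR : R.IsHermitian) (hσ : σ.PosSemidef),
      σ.trace = 1 →
      ∀ δ : ℝ, 0 ≤ δ → δ ≤ 1 →
      (1 - δ) * Real.sqrt (((R * R * σ).trace).re) ≤ nucNorm (hσ.sqrt * R * hσ.sqrt) →
      frobNorm ((R * R - ((((R * R * σ).trace).re : ℝ) : ℂ) • (1 : Matrix (Fin d) (Fin d) ℂ)) * hσ.sqrt) ^ 2
        ≤ C * Real.sqrt δ * opNorm R ^ 2 * ((R * R * σ).trace).re := by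
  refine ⟨2 * √2, by positivity, fun d R σ hR hσ htr δ hδ _ h => ?_⟩
  rw [nucNorm_eq_re_trace_abs, hσ.sqrt_eq_cfcSqrt] at h
  rw [frobNorm_eq_norm_frobeniusVec, hσ.sqrt_eq_cfcSqrt, opNorm_eq_l2_opNorm]
  exact hR.norm_frobeniusVec_mul_self_sub_smul_one_mul_sqrt_sq_le hσ htr rfl hδ h
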